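/- arXiv:1801.05593 — 2 statements merged into one kernel-verified Lean document; each statement's English description precedes it below -/
import Mathlib

section
/- Under these assumptions, for every α ∈ [0,1] one has κ_α(τ,σ) ≤ (1−α)·(Ric(τ,σ)/(d_τ∨d_σ) + 2·(1/(d_τ∧d_σ) − 1/(d_τ∨d_σ)) + (d_τ∧d_σ)/(d_τ∨d_σ) − 1); consequently the Lin–Lu–Yau Ricci curvature satisfies κ(τ,σ) ≤ Ric(τ,σ)/(d_τ∨d_σ) + 2·(1/(d_τ∧d_σ) − 1/(d_τ∨d_σ)) + (d_τ∧d_σ)/(d_τ∨d_σ) − 1. -/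
open Finset Filter Topology

noncomputable section

/-- A coupling between two (probability) mass functions `μ` and `ν` on a finite
vertex set: a matrix with values in `[0,1]` whose row sums are `μ` and whose
column sums are `ν`. -/
def IsCoupling {V : Type*} [Fintype V] (A : V → V → ℝ) (μ ν : V → ℝ) : Prop :=
  (∀ x y, 0 ≤ A x y ∧ A x y ≤ 1) ∧
  (∀ x, ∑ y, A x y = μ x) ∧
  (∀ y, ∑ x, A x y = ν y)

/-- The (1-)Wasserstein distance between two mass functions on the vertex set of a
graph, with respect to the graph distance. -/
def Wass {V : Type*} [Fintype V] (G : SimpleGraph V) (μ ν : V → ℝ) : ℝ :=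
  sInf {c | ∃ A : V → V → ℝ, IsCoupling A μ ν ∧
    c = ∑ x, ∑ y, A x y * (G.dist x y : ℝ)}

/-- The probability measure `m_x^α`: mass `α` at `x`, mass `(1-α)/d_x` at each
neighbor of `x`, and `0` elsewhere. -/
def mMeas {V : Type*} [Fintype V] [DecidableEq V] (G : SimpleGraph V)
    [DecidableRel G.Adj] (α : ℝ) (x : V) : V → ℝ :=
  fun z => if z = x then α else if G.Adj x z then (1 - α) / (G.degree x : ℝ) else 0

/-- The `α`-Ricci curvature `κ_α(x,y) = 1 - W(m_x^α, m_y^α)/d(x,y)`. -/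
def kappaAlpha {V : Type*} [Fintype V] [DecidableEq V] (G : SimpleGraph V)
    [DecidableRel G.Adj] (α : ℝ) (x y : V) : ℝ :=
  1 - Wass G (mMeas G α x) (mMeas G α y) / (G.dist x y : ℝ)

/-- The Lin–Lu–Yau Ricci curvature `κ(x,y) = lim_{α→1⁻} κ_α(x,y)/(1-α)`. -/
def kappa {V : Type*} [Fintype V] [DecidableEq V] (G : SimpleGraph V)
    [DecidableRel G.Adj] (x y : V) : ℝ :=
  limUnder (𝓝[<] (1 : ℝ)) (fun α => kappaAlpha G α x y / (1 - α))

/-- The (non-normalized) graph Laplacian `(Δf)(x) = d_x f(x) - ∑_{y ~ x} f(y)`. -/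
def lap {V : Type*} [Fintype V] [DecidableEq V] (G : SimpleGraph V)
    [DecidableRel G.Adj] (f : V → ℝ) (x : V) : ℝ :=
  (G.degree x : ℝ) * f x - ∑ y ∈ G.neighborFinset x, f y


/-!
As `d(τ,σ) = 1`, `κ_α(τ,σ) = 1 - W(m_τ^α, m_σ^α)`, and `W` is bounded below by Kantorovich duality
with the `1`-Lipschitz test function `min (d(·,σ), d(·,S_σ) - 1)`; this gives
`W ≥ 1 - (1-α) (2/d_τ - 2 n_σ/d_σ)`, and exchanging `τ` and `σ` gives the symmetric bound. Since
`d_τ - n_τ = 1 + m = d_σ - n_σ`, the claimed bound is the first of these when `d_τ ≤ d_σ` and the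
second otherwise. Mixing a coupling of `m_τ^α, m_σ^α` with the Dirac coupling of `(τ, σ)` shows that
`κ_α/(1-α)` is nondecreasing, so the limit `κ` exists and inherits the bound.
-/

section Wasserstein

variable {V : Type*} [Fintype V] {G : SimpleGraph V} {μ ν : V → ℝ} {A : V → V → ℝ}

lemma IsCoupling.symm (hA : IsCoupling A μ ν) : IsCoupling (fun x y => A y x) ν μ :=
  ⟨fun x y => hA.1 y x, hA.2.2, hA.2.1⟩

lemma isCoupling_mul (hμ : ∀ x, 0 ≤ μ x) (hμ1 : ∑ x, μ x = 1)
    (hν : ∀ x, 0 ≤ ν x) (hν1 : ∑ x, ν x = 1) : IsCoupling (fun x y => μ x * ν y) μ ν := by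
  have hle {ρ : V → ℝ} (hρ : ∀ x, 0 ≤ ρ x) (hρ1 : ∑ x, ρ x = 1) (x : V) : ρ x ≤ 1 :=
    hρ1 ▸ Finset.single_le_sum (fun y _ => hρ y) (Finset.mem_univ x)
  refine ⟨fun x y => ⟨mul_nonneg (hμ x) (hν y), ?_⟩, fun x => ?_, fun y => ?_⟩
  · exact mul_le_one₀ (hle hμ hμ1 x) (hν y) (hle hν hν1 y)
  · rw [← Finset.mul_sum, hν1, mul_one]
  · rw [← Finset.sum_mul, hμ1, one_mul]

lemma wass_le_of_isCoupling (hA : IsCoupling A μ ν) :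
    Wass G μ ν ≤ ∑ x, ∑ y, A x y * (G.dist x y : ℝ) := by
  refine csInf_le ⟨0, ?_⟩ ⟨A, hA, rfl⟩
  rintro c ⟨B, hB, rfl⟩
  exact Finset.sum_nonneg fun x _ => Finset.sum_nonneg fun y _ =>
    mul_nonneg (hB.1 x y).1 (Nat.cast_nonneg _)

lemma le_wass {c : ℝ} (hne : ∃ A, IsCoupling A μ ν)
    (h : ∀ A, IsCoupling A μ ν → c ≤ ∑ x, ∑ y, A x y * (G.dist x y : ℝ)) :
    c ≤ Wass G μ ν := by
  obtain ⟨A, hA⟩ := hne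
  refine le_csInf ⟨_, A, hA, rfl⟩ ?_
  rintro _ ⟨B, hB, rfl⟩
  exact h B hB

lemma wass_comm : Wass G μ ν = Wass G ν μ := by
  have hsub : ∀ μ ν : V → ℝ, {c | ∃ A, IsCoupling A μ ν ∧ c = ∑ x, ∑ y, A x y * (G.dist x y : ℝ)}
      ⊆ {c | ∃ A, IsCoupling A ν μ ∧ c = ∑ x, ∑ y, A x y * (G.dist x y : ℝ)} := by
    rintro μ ν _ ⟨A, hA, rfl⟩
    refine ⟨_, hA.symm, ?_⟩
    rw [Finset.sum_comm]
    simp only [SimpleGraph.dist_comm]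
  exact congrArg sInf ((hsub μ ν).antisymm (hsub ν μ))

/-- Kantorovich duality, the easy direction. -/
lemma sub_le_wass (hne : ∃ A, IsCoupling A μ ν) {f : V → ℝ}
    (hf : ∀ x y, f x - f y ≤ G.dist x y) :
    ∑ x, f x * μ x - ∑ y, f y * ν y ≤ Wass G μ ν := by
  refine le_wass hne fun A hA => ?_
  calc ∑ x, f x * μ x - ∑ y, f y * ν y
      = ∑ x, ∑ y, A x y * (f x - f y) := by
        simp only [← hA.2.1, ← hA.2.2, Finset.mul_sum, mul_sub, Finset.sum_sub_distrib, mul_comm]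
        rw [Finset.sum_comm (f := fun y x => f y * A x y)]
    _ ≤ ∑ x, ∑ y, A x y * (G.dist x y : ℝ) :=
        Finset.sum_le_sum fun x _ => Finset.sum_le_sum fun y _ =>
          mul_le_mul_of_nonneg_left (hf x y) (hA.1 x y).1

variable [DecidableEq V]

lemma IsCoupling.mix (hA : IsCoupling A μ ν) {c : ℝ} (hc : c ∈ Set.Icc (0 : ℝ) 1) (x y : V) :
    IsCoupling (fun u v => c * A u v + (1 - c) * if u = x ∧ v = y then 1 else 0)
      (fun u => c * μ u + (1 - c) * if u = x then 1 else 0)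
      (fun v => c * ν v + (1 - c) * if v = y then 1 else 0) := by
  obtain ⟨hc0, hc1⟩ := hc
  refine ⟨fun u v => ⟨?_, ?_⟩, fun u => ?_, fun v => ?_⟩
  · have := (hA.1 u v).1
    dsimp only
    split_ifs <;> nlinarith
  · have := (hA.1 u v).2
    dsimp only
    split_ifs <;> nlinarith
  · simp [ite_and, Finset.sum_add_distrib, ← Finset.mul_sum, hA.2.1 u]
  · simp [ite_and, Finset.sum_add_distrib, ← Finset.mul_sum, hA.2.2 v]

lemma wass_mix_le (hne : ∃ A, IsCoupling A μ ν) {c : ℝ} (hc0 : 0 < c) (hc1 : c ≤ 1) (x y : V) :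
    Wass G (fun u => c * μ u + (1 - c) * if u = x then 1 else 0)
        (fun v => c * ν v + (1 - c) * if v = y then 1 else 0)
      ≤ c * Wass G μ ν + (1 - c) * G.dist x y := by
  set μ' : V → ℝ := fun u => c * μ u + (1 - c) * if u = x then 1 else 0
  set ν' : V → ℝ := fun v => c * ν v + (1 - c) * if v = y then 1 else 0
  suffices (Wass G μ' ν' - (1 - c) * G.dist x y) / c ≤ Wass G μ ν by
    rw [div_le_iff₀ hc0] at this
    linarith
  refine le_wass hne fun A hA => ?_
  rw [div_le_iff₀ hc0, sub_le_iff_le_add]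
  refine (wass_le_of_isCoupling (hA.mix ⟨hc0.le, hc1⟩ x y)).trans (le_of_eq ?_)
  simp only [ite_and, mul_ite, mul_one, mul_zero, add_mul, mul_assoc, ite_mul, zero_mul,
    Finset.sum_add_distrib, ← Finset.mul_sum, Finset.sum_ite_irrel, Finset.sum_ite_eq',
    Finset.mem_univ, if_true, Finset.sum_const_zero]
  ring

end Wasserstein

section Measures

variable {V : Type*} [Fintype V] [DecidableEq V] {G : SimpleGraph V} [DecidableRel G.Adj]
  {α : ℝ} {x y : V}

lemma mMeas_nonneg (hα : α ∈ Set.Icc (0 : ℝ) 1) (z : V) : 0 ≤ mMeas G α x z := by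
  have : 0 ≤ 1 - α := sub_nonneg.2 hα.2
  unfold mMeas
  split_ifs <;> first | exact hα.1 | positivity

lemma sum_mul_mMeas (f : V → ℝ) :
    ∑ z, f z * mMeas G α x z
      = α * f x + (1 - α) / G.degree x * ∑ y ∈ G.neighborFinset x, f y := by
  have h (z : V) : f z * mMeas G α x z = (if z = x then α * f z else 0)
      + if G.Adj x z then (1 - α) / G.degree x * f z else 0 := by
    by_cases hz : z = x
    · subst hz
      simp [mMeas, mul_comm]
    · simp only [mMeas, hz, if_false]
      split_ifs <;> ring
  simp only [h, Finset.sum_add_distrib, Finset.sum_ite_eq', Finset.mem_univ, if_true,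
    ← Finset.sum_filter, ← SimpleGraph.neighborFinset_eq_filter, Finset.mul_sum]

lemma sum_mMeas (hx : 0 < G.degree x) : ∑ z, mMeas G α x z = 1 := by
  have := sum_mul_mMeas (G := G) (α := α) (x := x) 1
  simp only [Pi.one_apply, one_mul, Finset.sum_const, SimpleGraph.card_neighborFinset_eq_degree,
    nsmul_eq_mul, mul_one] at this
  rw [this]
  field_simp
  ring

lemma exists_isCoupling_mMeas (hα : α ∈ Set.Icc (0 : ℝ) 1) (hx : 0 < G.degree x)
    (hy : 0 < G.degree y) : ∃ A, IsCoupling A (mMeas G α x) (mMeas G α y) :=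
  ⟨_, isCoupling_mul (mMeas_nonneg hα) (sum_mMeas hx) (mMeas_nonneg hα) (sum_mMeas hy)⟩

lemma mMeas_eq_mix {β : ℝ} (hα : α < 1) :
    mMeas G β x = fun z => (1 - β) / (1 - α) * mMeas G α x z
      + (1 - (1 - β) / (1 - α)) * if z = x then 1 else 0 := by
  have : 1 - α ≠ 0 := sub_ne_zero.2 hα.ne'
  ext z
  unfold mMeas
  split_ifs <;> field_simp <;> ring

lemma kappaAlpha_of_adj (hxy : G.Adj x y) :
    kappaAlpha G α x y = 1 - Wass G (mMeas G α x) (mMeas G α y) := by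
  rw [kappaAlpha, SimpleGraph.dist_eq_one_iff_adj.2 hxy, Nat.cast_one, div_one]

lemma kappaAlpha_div_one_sub_le (hxy : G.Adj x y) {β : ℝ} (hα : 0 ≤ α) (hαβ : α ≤ β) (hβ : β < 1) :
    kappaAlpha G α x y / (1 - α) ≤ kappaAlpha G β x y / (1 - β) := by
  have hα1 : 0 < 1 - α := by linarith
  have hβ1 : 0 < 1 - β := by linarith
  set c := (1 - β) / (1 - α)
  have hc : c * (1 - α) = 1 - β := div_mul_cancel₀ _ hα1.ne'
  have hmix := wass_mix_le (G := G) (exists_isCoupling_mMeas ⟨hα, by linarith⟩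
      hxy.degree_pos_left hxy.degree_pos_right)
    (div_pos hβ1 hα1) ((div_le_one hα1).2 (by linarith)) x y
  rw [← mMeas_eq_mix (by linarith), ← mMeas_eq_mix (by linarith),
    SimpleGraph.dist_eq_one_iff_adj.2 hxy, Nat.cast_one, mul_one] at hmix
  rw [kappaAlpha_of_adj hxy, kappaAlpha_of_adj hxy, div_le_div_iff₀ hα1 hβ1, ← hc]
  nlinarith

lemma kappa_le_of_kappaAlpha_le (hxy : G.Adj x y) {C : ℝ}
    (h : ∀ α ∈ Set.Ico (0 : ℝ) 1, kappaAlpha G α x y ≤ (1 - α) * C) : kappa G x y ≤ C := by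
  have hC : ∀ α ∈ Set.Ioo (0 : ℝ) 1, kappaAlpha G α x y / (1 - α) ≤ C := fun α hα =>
    (div_le_iff₀' (sub_pos.2 hα.2)).2 (h α ⟨hα.1.le, hα.2⟩)
  have hmono : MonotoneOn (fun α => kappaAlpha G α x y / (1 - α)) (Set.Ioo 0 1) :=
    fun α hα β hβ hαβ => kappaAlpha_div_one_sub_le hxy hα.1.le hαβ hβ.2
  have hlim := hmono.tendsto_nhdsWithin_Ioo_left (by norm_num)
    ⟨C, Set.forall_mem_image.2 hC⟩
  rw [kappa, hlim.limUnder_eq]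
  exact csSup_le ((Set.nonempty_Ioo.2 one_pos).image _) (Set.forall_mem_image.2 hC)

end Measures

section Potential

variable {V : Type*} {G : SimpleGraph V}

lemma SimpleGraph.Connected.two_le_dist (hconn : G.Connected) {u v : V} (huv : u ≠ v)
    (hadj : ¬ G.Adj u v) : 2 ≤ G.dist u v := by
  have := hconn.pos_dist_of_ne huv
  have : G.dist u v ≠ 1 := mt SimpleGraph.dist_eq_one_iff_adj.1 hadj
  omega

/-- The McShane extension: the largest `1`-Lipschitz function with `f s ≤ c s` on `A`. -/
def distPotential (G : SimpleGraph V) (A : Finset V) (hA : A.Nonempty) (c : V → ℝ) (y : V) : ℝ :=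
  A.inf' hA fun s => G.dist y s + c s

lemma distPotential_sub_le (hconn : G.Connected) {A : Finset V} (hA : A.Nonempty) (c : V → ℝ)
    (x y : V) : distPotential G A hA c x - distPotential G A hA c y ≤ G.dist x y := by
  rw [sub_le_comm]
  refine Finset.le_inf' hA _ fun s hs => ?_
  have hxs : distPotential G A hA c x ≤ G.dist x s + c s := Finset.inf'_le _ hs
  have : (G.dist x s : ℝ) ≤ G.dist x y + G.dist y s := by exact_mod_cast hconn.dist_triangle
  linarith

variable [DecidableEq V] {b y : V} {S : Finset V}

/-- `min (d(·, b), d(·, S) - 1)`. -/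
def testFunction (G : SimpleGraph V) (b : V) (S : Finset V) : V → ℝ :=
  distPotential G (insert b S) (Finset.insert_nonempty b S) fun s => if s = b then 0 else -1

lemma le_testFunction {t : ℝ} (hb : t ≤ G.dist y b) (hS : ∀ s ∈ S, t + 1 ≤ G.dist y s) :
    t ≤ testFunction G b S y := by
  refine Finset.le_inf' (Finset.insert_nonempty b S) _ fun s hs => ?_
  rcases Finset.mem_insert.1 hs with rfl | hs
  · simpa using hb
  · dsimp only
    split_ifs <;> linarith [hS s hs]

lemma testFunction_le_of_adj (hyb : G.Adj y b) : testFunction G b S y ≤ 1 :=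
  (Finset.inf'_le _ (Finset.mem_insert_self b S)).trans
    (by simp [SimpleGraph.dist_eq_one_iff_adj.2 hyb])

lemma testFunction_le_neg_one (hbS : b ∉ S) {s : V} (hs : s ∈ S) : testFunction G b S s ≤ -1 :=
  (Finset.inf'_le _ (Finset.mem_insert_of_mem hs)).trans
    (by simp [ne_of_mem_of_not_mem hs hbS])

lemma testFunction_self (hconn : G.Connected) (hbS : b ∉ S) : testFunction G b S b = 0 :=
  le_antisymm ((Finset.inf'_le _ (Finset.mem_insert_self b S)).trans (by simp))
    (le_testFunction (by simp) fun s hs => by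
      exact_mod_cast hconn.pos_dist_of_ne (ne_of_mem_of_not_mem hs hbS).symm)

end Potential

section CurvatureBound

variable {V : Type*} [Fintype V] [DecidableEq V] {G : SimpleGraph V} [DecidableRel G.Adj]
  {a b : V} {U S : Finset V}

lemma degree_eq_card_add_one (hN : G.neighborFinset a = insert b U) (hbU : b ∉ U) :
    G.degree a = #U + 1 := by
  rw [← G.card_neighborFinset_eq_degree, hN, Finset.card_insert_of_notMem hbU]

lemma one_sub_le_wass_mMeas_of_test (hab : G.Adj a b) {f : V → ℝ}
    (hf : ∀ x y, f x - f y ≤ G.dist x y) (hfb : f b = 0) (hfa : 1 ≤ f a) {k : ℝ}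
    (hsum_a : 2 * (G.degree a - 1) ≤ ∑ y ∈ G.neighborFinset a, f y)
    (hsum_b : ∑ y ∈ G.neighborFinset b, f y ≤ G.degree b - 2 * k)
    {α : ℝ} (hα : α ∈ Set.Icc (0 : ℝ) 1) :
    1 - (1 - α) * (2 / G.degree a - 2 * k / G.degree b)
      ≤ Wass G (mMeas G α a) (mMeas G α b) := by
  have hW := sub_le_wass (exists_isCoupling_mMeas hα hab.degree_pos_left hab.degree_pos_right) hf
  rw [sum_mul_mMeas, sum_mul_mMeas, hfb] at hW
  have hda : (0 : ℝ) < G.degree a := by exact_mod_cast hab.degree_pos_left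
  have hdb : (0 : ℝ) < G.degree b := by exact_mod_cast hab.degree_pos_right
  have hα1 : 0 ≤ 1 - α := sub_nonneg.2 hα.2
  have h1 := mul_le_mul_of_nonneg_left hfa hα.1
  have h2 := mul_le_mul_of_nonneg_left hsum_a (div_nonneg hα1 hda.le)
  have h3 := mul_le_mul_of_nonneg_left hsum_b (div_nonneg hα1 hdb.le)
  have key : 1 - (1 - α) * (2 / G.degree a - 2 * k / G.degree b) = α * 1
      + (1 - α) / G.degree a * (2 * (G.degree a - 1))
      - (1 - α) / G.degree b * (G.degree b - 2 * k) := by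
    field_simp
    ring
  linarith

lemma one_sub_le_wass_mMeas (hconn : G.Connected) (hab : G.Adj a b)
    (hN : G.neighborFinset a = insert b U) (hbU : b ∉ U) (hUb : ∀ x ∈ U, ¬ G.Adj x b)
    (hUS : ∀ x ∈ U, ∀ s ∈ S, 3 ≤ G.dist x s)
    (hSb : S ⊆ G.neighborFinset b) (haS : a ∉ S) (hSa : ∀ s ∈ S, ¬ G.Adj s a)
    {α : ℝ} (hα : α ∈ Set.Icc (0 : ℝ) 1) :
    1 - (1 - α) * (2 / G.degree a - 2 * #S / G.degree b)
      ≤ Wass G (mMeas G α a) (mMeas G α b) := by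
  have hbS : b ∉ S := fun h => G.irrefl ((G.mem_neighborFinset b b).1 (hSb h))
  have hfb : testFunction G b S b = 0 := testFunction_self hconn hbS
  refine one_sub_le_wass_mMeas_of_test (f := testFunction G b S) hab
    (distPotential_sub_le hconn _ _) hfb ?_ ?_ ?_ hα
  · refine le_testFunction (by simp [SimpleGraph.dist_eq_one_iff_adj.2 hab]) fun s hs => ?_
    norm_num
    exact_mod_cast hconn.two_le_dist (ne_of_mem_of_not_mem hs haS).symm fun h => hSa s hs h.symm
  · rw [degree_eq_card_add_one hN hbU, hN, Finset.sum_insert hbU, hfb, zero_add]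
    push_cast
    rw [add_sub_cancel_right, mul_comm, ← nsmul_eq_mul]
    refine Finset.card_nsmul_le_sum U _ 2 fun x hx => le_testFunction ?_ fun s hs => ?_
    · exact_mod_cast hconn.two_le_dist (ne_of_mem_of_not_mem hx hbU) (hUb x hx)
    · linarith [show (3 : ℝ) ≤ G.dist x s by exact_mod_cast hUS x hx s hs]
  · have hcard := Finset.card_sdiff_add_card_eq_card hSb
    rw [G.card_neighborFinset_eq_degree] at hcard
    have h1 := Finset.sum_le_card_nsmul (G.neighborFinset b \ S) (testFunction G b S) 1
      fun y hy =>
        testFunction_le_of_adj ((G.mem_neighborFinset b y).1 (Finset.sdiff_subset hy)).symm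
    have h2 := Finset.sum_le_card_nsmul S (testFunction G b S) (-1) fun s =>
      testFunction_le_neg_one hbS
    rw [← Finset.sum_sdiff hSb, ← hcard]
    simp only [nsmul_eq_mul, mul_one, mul_neg] at h1 h2
    push_cast
    linarith

end CurvatureBound

lemma ricci_bound_eq {p q np nq : ℝ} (hp : 0 < p) (hpq : p ≤ q) (h : p - np = q - nq) :
    (2 - np - nq) / max p q + 2 * (1 / min p q - 1 / max p q) + min p q / max p q - 1
      = 2 / p - 2 * nq / q := by
  have hq : 0 < q := hp.trans_le hpq
  rw [max_eq_right hpq, min_eq_left hpq]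
  field_simp
  linear_combination p * h

theorem stmt3_general
    {V : Type*} [Fintype V] [DecidableEq V]
    (G : SimpleGraph V) [DecidableRel G.Adj]
    (hconn : G.Connected)
    (τ σ : V) (hadj : G.Adj τ σ)
    (Sτ Tτ Sσ Tσ : Finset V) (φ : V → V)
    (hNτ : G.neighborFinset τ = insert σ (Sτ ∪ Tτ))
    (hNσ : G.neighborFinset σ = insert τ (Sσ ∪ Tσ))
    (hσnot : σ ∉ Sτ ∪ Tτ) (hτnot : τ ∉ Sσ ∪ Tσ)
    (hdisjτ : Disjoint Sτ Tτ) (hdisjσ : Disjoint Sσ Tσ)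
    (hφ : Set.BijOn φ ↑Tτ ↑Tσ)
    (hnadjσ : ∀ x ∈ Sτ ∪ Tτ, ¬ G.Adj x σ)
    (hnadjτ : ∀ x ∈ Sσ ∪ Tσ, ¬ G.Adj x τ)
    (hdist1 : ∀ x ∈ Sτ ∪ Tτ, ∀ y ∈ Sσ, 3 ≤ G.dist x y)
    (hdist2 : ∀ x ∈ Sτ, ∀ y ∈ Tσ, 3 ≤ G.dist x y) :
    (∀ α : ℝ, α ∈ Set.Icc (0 : ℝ) 1 →
      kappaAlpha G α τ σ ≤ (1 - α) * (((2 : ℝ) - (Sτ.card : ℝ) - (Sσ.card : ℝ)) / max (G.degree τ : ℝ) (G.degree σ : ℝ)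
      + 2 * (1 / min (G.degree τ : ℝ) (G.degree σ : ℝ)
              - 1 / max (G.degree τ : ℝ) (G.degree σ : ℝ))
      + min (G.degree τ : ℝ) (G.degree σ : ℝ) / max (G.degree τ : ℝ) (G.degree σ : ℝ) - 1)) ∧
    kappa G τ σ ≤ (((2 : ℝ) - (Sτ.card : ℝ) - (Sσ.card : ℝ)) / max (G.degree τ : ℝ) (G.degree σ : ℝ)
      + 2 * (1 / min (G.degree τ : ℝ) (G.degree σ : ℝ)
              - 1 / max (G.degree τ : ℝ) (G.degree σ : ℝ))
      + min (G.degree τ : ℝ) (G.degree σ : ℝ) / max (G.degree τ : ℝ) (G.degree σ : ℝ) - 1) := by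
  have hm : #Tτ = #Tσ := Finset.card_nbij φ hφ.mapsTo hφ.injOn hφ.surjOn
  have hdiff : (G.degree τ : ℝ) - #Sτ = G.degree σ - #Sσ := by
    rw [degree_eq_card_add_one hNτ hσnot, degree_eq_card_add_one hNσ hτnot,
      Finset.card_union_of_disjoint hdisjτ, Finset.card_union_of_disjoint hdisjσ, hm]
    push_cast
    ring
  have hWτ {α : ℝ} (hα : α ∈ Set.Icc (0 : ℝ) 1) :=
    one_sub_le_wass_mMeas hconn hadj hNτ hσnot hnadjσ hdist1
      (hNσ ▸ Finset.subset_union_left.trans (Finset.subset_insert _ _))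
      (fun h => hτnot (Finset.mem_union_left _ h))
      (fun s hs => hnadjτ s (Finset.mem_union_left _ hs)) hα
  have hWσ {α : ℝ} (hα : α ∈ Set.Icc (0 : ℝ) 1) :=
    wass_comm (G := G) ▸ one_sub_le_wass_mMeas hconn hadj.symm hNσ hτnot hnadjτ
      (fun x hx s hs => G.dist_comm ▸ (Finset.mem_union.1 hx).elim
        (hdist1 s (Finset.mem_union_left _ hs) x) (hdist2 s hs x))
      (hNτ ▸ Finset.subset_union_left.trans (Finset.subset_insert _ _))
      (fun h => hσnot (Finset.mem_union_left _ h))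
      (fun s hs => hnadjσ s (Finset.mem_union_left _ hs)) hα
  refine ⟨?bound, kappa_le_of_kappaAlpha_le hadj fun α hα => ?bound α ⟨hα.1, hα.2.le⟩⟩
  intro α hα
  rw [kappaAlpha_of_adj hadj]
  rcases le_total (G.degree τ : ℝ) (G.degree σ) with h | h
  · rw [ricci_bound_eq (by exact_mod_cast hadj.degree_pos_left) h hdiff]
    linarith [hWτ hα]
  · rw [max_comm, min_comm, sub_right_comm (2 : ℝ),
      ricci_bound_eq (by exact_mod_cast hadj.degree_pos_right) h hdiff.symm]
    linarith [hWσ hα]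

theorem stmt3
    {V : Type*} [Fintype V] [DecidableEq V]
    (G : SimpleGraph V) [DecidableRel G.Adj]
    (hconn : G.Connected) (hcard : 1 < Fintype.card V)
    (τ σ : V) (hadj : G.Adj τ σ)
    (Sτ Tτ Sσ Tσ : Finset V) (φ : V → V)
    (hNτ : G.neighborFinset τ = insert σ (Sτ ∪ Tτ))
    (hNσ : G.neighborFinset σ = insert τ (Sσ ∪ Tσ))
    (hσnot : σ ∉ Sτ ∪ Tτ) (hτnot : τ ∉ Sσ ∪ Tσ)
    (hdisjτ : Disjoint Sτ Tτ) (hdisjσ : Disjoint Sσ Tσ)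
    (hφ : Set.BijOn φ ↑Tτ ↑Tσ)
    (hφadj : ∀ t ∈ Tτ, G.Adj t (φ t))
    (hd1 : Disjoint Sτ Sσ) (hd2 : Disjoint Sτ Tσ)
    (hd3 : Disjoint Tτ Sσ) (hd4 : Disjoint Tτ Tσ)
    (hτd : τ ∉ Sτ ∪ Tτ) (hσd : σ ∉ Sσ ∪ Tσ)
    (hnadjσ : ∀ x ∈ Sτ ∪ Tτ, ¬ G.Adj x σ)
    (hnadjτ : ∀ x ∈ Sσ ∪ Tσ, ¬ G.Adj x τ)
    (hdist1 : ∀ x ∈ Sτ ∪ Tτ, ∀ y ∈ Sσ, 3 ≤ G.dist x y)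
    (hdist2 : ∀ x ∈ Sτ, ∀ y ∈ Tσ, 3 ≤ G.dist x y) :
    (∀ α : ℝ, α ∈ Set.Icc (0 : ℝ) 1 →
      kappaAlpha G α τ σ ≤ (1 - α) * (((2 : ℝ) - (Sτ.card : ℝ) - (Sσ.card : ℝ)) / max (G.degree τ : ℝ) (G.degree σ : ℝ)
      + 2 * (1 / min (G.degree τ : ℝ) (G.degree σ : ℝ)
              - 1 / max (G.degree τ : ℝ) (G.degree σ : ℝ))
      + min (G.degree τ : ℝ) (G.degree σ : ℝ) / max (G.degree τ : ℝ) (G.degree σ : ℝ) - 1)) ∧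
    kappa G τ σ ≤ (((2 : ℝ) - (Sτ.card : ℝ) - (Sσ.card : ℝ)) / max (G.degree τ : ℝ) (G.degree σ : ℝ)
      + 2 * (1 / min (G.degree τ : ℝ) (G.degree σ : ℝ)
              - 1 / max (G.degree τ : ℝ) (G.degree σ : ℝ))
      + min (G.degree τ : ℝ) (G.degree σ : ℝ) / max (G.degree τ : ℝ) (G.degree σ : ℝ) - 1) :=
  stmt3_general G hconn τ σ hadj Sτ Tτ Sσ Tσ φ hNτ hNσ hσnot hτnot hdisjτ hdisjσ hφ hnadjσ hnadjτ
    hdist1 hdist2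
end
end

section
/- For every pair of distinct vertices x, y of G, the function α ↦ κ_α(x,y) is concave on [0,1]: for all α₀, α₁ ∈ [0,1] and all t ∈ [0,1], κ_{tα₀+(1−t)α₁}(x,y) ≥ t·κ_{α₀}(x,y) + (1−t)·κ_{α₁}(x,y). -/
/-!
The measure `m_x^α` is affine in `α`, and a convex combination of couplings of `(μ₀, ν₀)` and
`(μ₁, ν₁)` is a coupling of the combined marginals whose cost is the combined cost. Hence the
Wasserstein distance is jointly convex along such combinations, and `κ_α = 1 - W / d` is concave
in `α`. Mathlib's `dist` is `0` between unreachable vertices, where `κ_α ≡ 1`; otherwise both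
vertices have neighbours, so `m_x^α` and `m_y^α` are probability vectors and couplings exist.
-/

open Finset Filter Topology

namespace SimpleGraph

variable {V : Type*} [Fintype V] (G : SimpleGraph V)

noncomputable def transportCost (A : V → V → ℝ) : ℝ :=
  ∑ x, ∑ y, A x y * (G.dist x y : ℝ)

lemma transportCost_add_smul (a b : ℝ) (A B : V → V → ℝ) :
    G.transportCost (a • A + b • B) = a * G.transportCost A + b * G.transportCost B := by
  simp only [transportCost, Pi.add_apply, Pi.smul_apply, smul_eq_mul, Finset.mul_sum,
    ← Finset.sum_add_distrib]
  exact Finset.sum_congr rfl fun _ _ => Finset.sum_congr rfl fun _ _ => by ring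

lemma transportCost_nonneg {A : V → V → ℝ} {μ ν : V → ℝ} (hA : IsCoupling A μ ν) :
    0 ≤ G.transportCost A :=
  Finset.sum_nonneg fun a _ => Finset.sum_nonneg fun b _ =>
    mul_nonneg (hA.1 a b).1 (Nat.cast_nonneg _)

lemma wass_le_transportCost {A : V → V → ℝ} {μ ν : V → ℝ} (hA : IsCoupling A μ ν) :
    Wass G μ ν ≤ G.transportCost A :=
  csInf_le ⟨0, by rintro _ ⟨B, hB, rfl⟩; exact G.transportCost_nonneg hB⟩ ⟨A, hA, rfl⟩

lemma exists_transportCost_lt_wass_add {μ ν : V → ℝ} (h : ∃ A, IsCoupling A μ ν)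
    {ε : ℝ} (hε : 0 < ε) :
    ∃ A, IsCoupling A μ ν ∧ G.transportCost A < Wass G μ ν + ε := by
  obtain ⟨A, hA⟩ := h
  have hne : {c | ∃ A, IsCoupling A μ ν ∧ c = G.transportCost A}.Nonempty := ⟨_, A, hA, rfl⟩
  obtain ⟨_, ⟨B, hB, rfl⟩, hlt⟩ :=
    exists_lt_of_csInf_lt hne (lt_add_of_pos_right (Wass G μ ν) hε)
  exact ⟨B, hB, hlt⟩

end SimpleGraph

section Coupling

variable {V : Type*} [Fintype V]

lemma le_one_of_nonneg_of_sum_eq_one {μ : V → ℝ} (hμ : ∀ z, 0 ≤ μ z) (hμs : ∑ z, μ z = 1)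
    (z : V) : μ z ≤ 1 :=
  hμs ▸ Finset.single_le_sum (fun w _ => hμ w) (Finset.mem_univ z)

lemma isCoupling_mul_s9 {μ ν : V → ℝ} (hμ : ∀ z, 0 ≤ μ z) (hν : ∀ z, 0 ≤ ν z)
    (hμs : ∑ z, μ z = 1) (hνs : ∑ z, ν z = 1) :
    IsCoupling (fun a b => μ a * ν b) μ ν := by
  refine ⟨fun a b => ⟨mul_nonneg (hμ a) (hν b), ?_⟩, fun a => ?_, fun b => ?_⟩
  · exact mul_le_one₀ (le_one_of_nonneg_of_sum_eq_one hμ hμs a) (hν b)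
      (le_one_of_nonneg_of_sum_eq_one hν hνs b)
  · rw [← Finset.mul_sum, hνs, mul_one]
  · rw [← Finset.sum_mul, hμs, one_mul]

lemma IsCoupling.convex_comb {A₀ A₁ : V → V → ℝ} {μ₀ ν₀ μ₁ ν₁ : V → ℝ}
    (h₀ : IsCoupling A₀ μ₀ ν₀) (h₁ : IsCoupling A₁ μ₁ ν₁) {t : ℝ} (ht : t ∈ Set.Icc (0 : ℝ) 1) :
    IsCoupling (t • A₀ + (1 - t) • A₁) (t • μ₀ + (1 - t) • μ₁) (t • ν₀ + (1 - t) • ν₁) := by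
  obtain ⟨ht₀, ht₁⟩ := ht
  refine ⟨fun a b => ?_, fun a => ?_, fun b => ?_⟩
  · simp only [Pi.add_apply, Pi.smul_apply, smul_eq_mul]
    obtain ⟨h₀l, h₀u⟩ := h₀.1 a b
    obtain ⟨h₁l, h₁u⟩ := h₁.1 a b
    constructor <;> nlinarith
  · simp only [Pi.add_apply, Pi.smul_apply, smul_eq_mul, Finset.sum_add_distrib,
      ← Finset.mul_sum, h₀.2.1, h₁.2.1]
  · simp only [Pi.add_apply, Pi.smul_apply, smul_eq_mul, Finset.sum_add_distrib,
      ← Finset.mul_sum, h₀.2.2, h₁.2.2]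

end Coupling

namespace SimpleGraph

variable {V : Type*} [Fintype V] (G : SimpleGraph V)

lemma wass_convex_comb {μ₀ ν₀ μ₁ ν₁ : V → ℝ} (h₀ : ∃ A, IsCoupling A μ₀ ν₀)
    (h₁ : ∃ A, IsCoupling A μ₁ ν₁) {t : ℝ} (ht : t ∈ Set.Icc (0 : ℝ) 1) :
    Wass G (t • μ₀ + (1 - t) • μ₁) (t • ν₀ + (1 - t) • ν₁) ≤
      t * Wass G μ₀ ν₀ + (1 - t) * Wass G μ₁ ν₁ := by
  refine le_of_forall_pos_le_add fun ε hε => ?_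
  obtain ⟨A₀, hA₀, hc₀⟩ := G.exists_transportCost_lt_wass_add h₀ hε
  obtain ⟨A₁, hA₁, hc₁⟩ := G.exists_transportCost_lt_wass_add h₁ hε
  calc Wass G (t • μ₀ + (1 - t) • μ₁) (t • ν₀ + (1 - t) • ν₁)
      ≤ G.transportCost (t • A₀ + (1 - t) • A₁) :=
        G.wass_le_transportCost (hA₀.convex_comb hA₁ ht)
    _ = t * G.transportCost A₀ + (1 - t) * G.transportCost A₁ := G.transportCost_add_smul ..
    _ ≤ t * (Wass G μ₀ ν₀ + ε) + (1 - t) * (Wass G μ₁ ν₁ + ε) := by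
        gcongr
        · exact ht.1
        · exact sub_nonneg.2 ht.2
    _ = t * Wass G μ₀ ν₀ + (1 - t) * Wass G μ₁ ν₁ + ε := by ring

variable [DecidableRel G.Adj]

lemma degree_pos_of_dist_ne_zero {x y : V} (h : G.dist x y ≠ 0) : 0 < G.degree x := by
  obtain ⟨hne, ⟨w⟩⟩ := dist_ne_zero_iff_ne_and_reachable.mp h
  exact G.degree_pos_iff_exists_adj x |>.2 ⟨w.snd, w.adj_snd (w.not_nil_of_ne hne)⟩

variable [DecidableEq V]

lemma mMeas_nonneg {α : ℝ} (hα : α ∈ Set.Icc (0 : ℝ) 1) (x z : V) : 0 ≤ mMeas G α x z := by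
  unfold mMeas
  split_ifs
  · exact hα.1
  · exact div_nonneg (sub_nonneg.2 hα.2) (Nat.cast_nonneg _)
  · exact le_rfl

lemma sum_mMeas {α : ℝ} {x : V} (hx : 0 < G.degree x) : ∑ z, mMeas G α x z = 1 := by
  have hd : (G.degree x : ℝ) ≠ 0 := by positivity
  have hsplit : ∀ z, mMeas G α x z =
      (if z = x then α else 0) + (if G.Adj x z then (1 - α) / (G.degree x : ℝ) else 0) := by
    intro z
    unfold mMeas
    by_cases hz : z = x
    · subst hz; simp
    · simp [hz]
  rw [Finset.sum_congr rfl fun z _ => hsplit z, Finset.sum_add_distrib, Finset.sum_ite_eq',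
    Finset.sum_ite, Finset.sum_const_zero, Finset.sum_const, ← neighborFinset_eq_filter,
    card_neighborFinset_eq_degree, nsmul_eq_mul, if_pos (Finset.mem_univ x)]
  field_simp
  ring

lemma exists_isCoupling_mMeas {α : ℝ} (hα : α ∈ Set.Icc (0 : ℝ) 1) {x y : V}
    (hx : 0 < G.degree x) (hy : 0 < G.degree y) :
    ∃ A, IsCoupling A (mMeas G α x) (mMeas G α y) :=
  ⟨_, isCoupling_mul_s9 (G.mMeas_nonneg hα x) (G.mMeas_nonneg hα y) (G.sum_mMeas hx)
    (G.sum_mMeas hy)⟩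

lemma mMeas_convex_comb (α₀ α₁ t : ℝ) (x : V) :
    mMeas G (t * α₀ + (1 - t) * α₁) x = t • mMeas G α₀ x + (1 - t) • mMeas G α₁ x := by
  funext z
  simp only [mMeas, Pi.add_apply, Pi.smul_apply, smul_eq_mul]
  split_ifs <;> ring

end SimpleGraph

theorem stmt9_general {V : Type*} [Fintype V] [DecidableEq V]
    (G : SimpleGraph V) [DecidableRel G.Adj]
    (x y : V)
    (α₀ α₁ t : ℝ) (hα₀ : α₀ ∈ Set.Icc (0 : ℝ) 1) (hα₁ : α₁ ∈ Set.Icc (0 : ℝ) 1)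
    (ht : t ∈ Set.Icc (0 : ℝ) 1) :
    t * kappaAlpha G α₀ x y + (1 - t) * kappaAlpha G α₁ x y ≤
      kappaAlpha G (t * α₀ + (1 - t) * α₁) x y := by
  by_cases hd : G.dist x y = 0
  · simp [kappaAlpha, hd]
  have hx := G.degree_pos_of_dist_ne_zero hd
  have hy := G.degree_pos_of_dist_ne_zero (G.dist_comm ▸ hd)
  have hW := G.wass_convex_comb (G.exists_isCoupling_mMeas hα₀ hx hy)
    (G.exists_isCoupling_mMeas hα₁ hx hy) ht
  rw [← G.mMeas_convex_comb, ← G.mMeas_convex_comb] at hW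
  have hdist : (0 : ℝ) < G.dist x y := by exact_mod_cast Nat.pos_of_ne_zero hd
  unfold kappaAlpha
  have := div_le_div_of_nonneg_right hW hdist.le
  rw [add_div, mul_div_assoc, mul_div_assoc] at this
  linarith

theorem stmt9 {V : Type*} [Fintype V] [DecidableEq V]
    (G : SimpleGraph V) [DecidableRel G.Adj]
    (hconn : G.Connected) (hcard : 1 < Fintype.card V)
    (x y : V) (hxy : x ≠ y)
    (α₀ α₁ t : ℝ) (hα₀ : α₀ ∈ Set.Icc (0 : ℝ) 1) (hα₁ : α₁ ∈ Set.Icc (0 : ℝ) 1)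
    (ht : t ∈ Set.Icc (0 : ℝ) 1) :
    t * kappaAlpha G α₀ x y + (1 - t) * kappaAlpha G α₁ x y ≤
      kappaAlpha G (t * α₀ + (1 - t) * α₁) x y :=
  stmt9_general G x y α₀ α₁ t hα₀ hα₁ ht
end
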